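/- Let U ⊆ ℂ be open and ξ₀, η₀, ξ₁, η₁ : U → ℂ be real-differentiable, r₀ : U → ℝ real-differentiable with ∂̄r₀ = 2(η₀·∂̄ξ̄₀ + η̄₀·∂̄ξ₀)/(1 + ξ₀ξ̄₀)² on U. Assume (1 − ξ₀ξ̄₀)ξ̄₁ − 2ξ̄₀ ≠ 0 on U, and define pointwise ξ₂ = (2ξ₀ξ̄₁ + 1 − ξ₀ξ̄₀)/((1 − ξ₀ξ̄₀)ξ̄₁ − 2ξ̄₀), η₁ = ((1 + ξ̄₀ξ₁)²η₀ − (ξ₀ − ξ₁)²η̄₀ + (ξ₀ − ξ₁)(1 + ξ̄₀ξ₁)(1 + ξ₀ξ̄₀)r₀)/(1 + ξ₀ξ̄₀)² (assumed to coincide with the given η₁), and η₂ = ((ξ̄₀ − ξ̄₁)²η₀ − (1 + ξ₀ξ̄₁)²η̄₀ + (ξ̄₀ − ξ̄₁)(1 + ξ₀ξ̄₁)(1 + ξ₀ξ̄₀)r₀)/((1 − ξ₀ξ̄₀)ξ̄₁ − 2ξ̄₀)². Then on U: (η₂·∂̄ξ̄₂ + η̄₂·∂̄ξ₂)/(1 +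 ξ₂ξ̄₂)² = (η₁·∂̄ξ̄₁ + η̄₁·∂̄ξ₁)/(1 + ξ₁ξ̄₁)² + ∂̄( ((|ξ₀ − ξ₁|² − |1 + ξ₀ξ̄₁|²)/((1 + ξ₀ξ̄₀)(1 + ξ₁ξ̄₁)))·r₀ ). -/

import Mathlib

open ComplexConjugate

/-- The conjugate Wirtinger derivative `∂̄f` of a real-differentiable `f : ℂ → ℂ`. -/
noncomputable def wirtDbar (f : ℂ → ℂ) (ν : ℂ) : ℂ :=
  (1 / 2) * (fderiv ℝ f ν 1 + Complex.I * fderiv ℝ f ν Complex.I)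

/-!
The identity is a pointwise computation. The Wirtinger product and quotient rules express
`∂̄ξ₂`, `∂̄ξ̄₂` and `∂̄` of the potential through `ξ₀, ξ₁`, their conjugates and the four derivatives
`∂̄ξ₀, ∂̄ξ̄₀, ∂̄ξ₁, ∂̄ξ̄₁`. After substituting `η₁`, `η₂`, the equation for `∂̄r₀`, and
`1 + ξ₂ξ̄₂ = (1 + ξ₀ξ̄₀)²(1 + ξ₁ξ̄₁) / |(1 - ξ₀ξ̄₀)ξ̄₁ - 2ξ̄₀|²`, both sides are the same rational
function of these quantities, with conjugates treated as independent variables.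
-/

open Filter Topology

@[fun_prop]
theorem DifferentiableAt.fun_div_of_normedAlgebra {𝕜 𝕜' E : Type*} [NontriviallyNormedField 𝕜]
    [NormedField 𝕜'] [NormedAlgebra 𝕜 𝕜'] [NormedAddCommGroup E] [NormedSpace 𝕜 E]
    {f g : E → 𝕜'} {x : E} (hf : DifferentiableAt 𝕜 f x) (hg : DifferentiableAt 𝕜 g x)
    (hx : g x ≠ 0) : DifferentiableAt 𝕜 (fun y => f y / g y) x := by
  simpa only [div_eq_mul_inv] using hf.fun_mul (hg.fun_inv hx)

section Wirtinger

variable {f g : ℂ → ℂ} {ν : ℂ}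

theorem wirtDbar_congr (h : f =ᶠ[𝓝 ν] g) : wirtDbar f ν = wirtDbar g ν := by
  rw [wirtDbar, wirtDbar, h.fderiv_eq]

theorem wirtDbar_const (c : ℂ) : wirtDbar (fun _ => c) ν = 0 := by
  simp [wirtDbar]

theorem wirtDbar_add (hf : DifferentiableAt ℝ f ν) (hg : DifferentiableAt ℝ g ν) :
    wirtDbar (fun w => f w + g w) ν = wirtDbar f ν + wirtDbar g ν := by
  simp [wirtDbar, fderiv_fun_add hf hg]; ring

theorem wirtDbar_sub (hf : DifferentiableAt ℝ f ν) (hg : DifferentiableAt ℝ g ν) :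
    wirtDbar (fun w => f w - g w) ν = wirtDbar f ν - wirtDbar g ν := by
  simp [wirtDbar, fderiv_fun_sub hf hg]; ring

theorem wirtDbar_mul (hf : DifferentiableAt ℝ f ν) (hg : DifferentiableAt ℝ g ν) :
    wirtDbar (fun w => f w * g w) ν = wirtDbar f ν * g ν + f ν * wirtDbar g ν := by
  simp [wirtDbar, fderiv_fun_mul hf hg]; ring

theorem wirtDbar_comp_of_hasDerivAt {h : ℂ → ℂ} {h' : ℂ} (hh : HasDerivAt h h' (g ν))
    (hg : DifferentiableAt ℝ g ν) :
    wirtDbar (fun w => h (g w)) ν = h' * wirtDbar g ν := by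
  have hcomp := (hh.hasFDerivAt.restrictScalars ℝ).comp ν hg.hasFDerivAt
  simp [wirtDbar, ← Function.comp_def, hcomp.fderiv]; ring

theorem wirtDbar_inv (hg : DifferentiableAt ℝ g ν) (hg0 : g ν ≠ 0) :
    wirtDbar (fun w => (g w)⁻¹) ν = -wirtDbar g ν / g ν ^ 2 := by
  rw [wirtDbar_comp_of_hasDerivAt (hasDerivAt_inv hg0) hg]; ring

theorem wirtDbar_div (hf : DifferentiableAt ℝ f ν) (hg : DifferentiableAt ℝ g ν)
    (hg0 : g ν ≠ 0) :
    wirtDbar (fun w => f w / g w) ν = (wirtDbar f ν * g ν - f ν * wirtDbar g ν) / g ν ^ 2 := by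
  simp_rw [div_eq_mul_inv]
  rw [wirtDbar_mul hf (hg.fun_inv hg0), wirtDbar_inv hg hg0]
  field_simp
  ring

end Wirtinger

theorem one_add_mul_conj_ne_zero (z : ℂ) : 1 + z * conj z ≠ 0 := by
  rw [Complex.mul_conj, ← Complex.ofReal_one, ← Complex.ofReal_add, Complex.ofReal_ne_zero]
  exact (add_pos_of_pos_of_nonneg one_pos (Complex.normSq_nonneg z)).ne'

theorem conj_reflection (a b : ℂ) :
    conj ((2 * a * conj b + 1 - a * conj a) / ((1 - a * conj a) * conj b - 2 * conj a)) =
      (2 * conj a * b + 1 - conj a * a) / ((1 - conj a * a) * b - 2 * a) := by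
  simp [map_ofNat]

theorem reflection_denom_conj_ne_zero {a b : ℂ}
    (hD : (1 - a * conj a) * conj b - 2 * conj a ≠ 0) : (1 - conj a * a) * b - 2 * a ≠ 0 := by
  simpa [map_ofNat] using (map_ne_zero (starRingEnd ℂ)).2 hD

theorem one_add_reflection_mul_conj {a b : ℂ}
    (hD : (1 - a * conj a) * conj b - 2 * conj a ≠ 0) :
    1 + (2 * a * conj b + 1 - a * conj a) / ((1 - a * conj a) * conj b - 2 * conj a) *
        conj ((2 * a * conj b + 1 - a * conj a) / ((1 - a * conj a) * conj b - 2 * conj a)) =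
      (1 + a * conj a) ^ 2 * (1 + b * conj b) /
        (((1 - a * conj a) * conj b - 2 * conj a) * ((1 - conj a * a) * b - 2 * a)) := by
  rw [conj_reflection, div_mul_div_comm,
    one_add_div (mul_ne_zero hD (reflection_denom_conj_ne_zero hD))]
  ring

theorem ofReal_reflection_potential (a b : ℂ) (r : ℝ) :
    (((Complex.normSq (a - b) - Complex.normSq (1 + a * conj b)) /
        ((1 + Complex.normSq a) * (1 + Complex.normSq b)) * r : ℝ) : ℂ) =
      ((a - b) * (conj a - conj b) - (1 + a * conj b) * (1 + conj a * b)) /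
        ((1 + a * conj a) * (1 + b * conj b)) * r := by
  push_cast
  simp only [← Complex.mul_conj, map_sub, map_add, map_mul, map_one, Complex.conj_conj]

theorem reflected_congruence_relation_general (U : Set ℂ) (hU : IsOpen U)
    (ξ₀ η₀ ξ₁ η₁ ξ₂ η₂ : ℂ → ℂ) (r₀ : ℂ → ℝ)
    (hξ₀ : DifferentiableOn ℝ ξ₀ U)
    (hξ₁ : DifferentiableOn ℝ ξ₁ U)
    (hr₀ : DifferentiableOn ℝ r₀ U)
    (hpot : ∀ ν ∈ U,
      wirtDbar (fun w => (r₀ w : ℂ)) ν =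
        2 * (η₀ ν * wirtDbar (fun w => conj (ξ₀ w)) ν + conj (η₀ ν) * wirtDbar ξ₀ ν) /
          (1 + ξ₀ ν * conj (ξ₀ ν)) ^ 2)
    (hden : ∀ ν ∈ U, (1 - ξ₀ ν * conj (ξ₀ ν)) * conj (ξ₁ ν) - 2 * conj (ξ₀ ν) ≠ 0)
    (hξ₂ : ∀ ν ∈ U, ξ₂ ν =
      (2 * ξ₀ ν * conj (ξ₁ ν) + 1 - ξ₀ ν * conj (ξ₀ ν)) /
        ((1 - ξ₀ ν * conj (ξ₀ ν)) * conj (ξ₁ ν) - 2 * conj (ξ₀ ν)))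
    (hη₁ : ∀ ν ∈ U, η₁ ν =
      ((1 + conj (ξ₀ ν) * ξ₁ ν) ^ 2 * η₀ ν - (ξ₀ ν - ξ₁ ν) ^ 2 * conj (η₀ ν) +
          (ξ₀ ν - ξ₁ ν) * (1 + conj (ξ₀ ν) * ξ₁ ν) * (1 + ξ₀ ν * conj (ξ₀ ν)) * (r₀ ν : ℂ)) /
        (1 + ξ₀ ν * conj (ξ₀ ν)) ^ 2)
    (hη₂ : ∀ ν ∈ U, η₂ ν =
      ((conj (ξ₀ ν) - conj (ξ₁ ν)) ^ 2 * η₀ ν - (1 + ξ₀ ν * conj (ξ₁ ν)) ^ 2 * conj (η₀ ν) +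
          (conj (ξ₀ ν) - conj (ξ₁ ν)) * (1 + ξ₀ ν * conj (ξ₁ ν)) * (1 + ξ₀ ν * conj (ξ₀ ν)) *
            (r₀ ν : ℂ)) /
        ((1 - ξ₀ ν * conj (ξ₀ ν)) * conj (ξ₁ ν) - 2 * conj (ξ₀ ν)) ^ 2) :
    ∀ ν ∈ U,
      (η₂ ν * wirtDbar (fun w => conj (ξ₂ w)) ν + conj (η₂ ν) * wirtDbar ξ₂ ν) /
          (1 + ξ₂ ν * conj (ξ₂ ν)) ^ 2 =
        (η₁ ν * wirtDbar (fun w => conj (ξ₁ w)) ν + conj (η₁ ν) * wirtDbar ξ₁ ν) /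
            (1 + ξ₁ ν * conj (ξ₁ ν)) ^ 2 +
          wirtDbar (fun w =>
            ((((Complex.normSq (ξ₀ w - ξ₁ w) - Complex.normSq (1 + ξ₀ w * conj (ξ₁ w))) /
                ((1 + Complex.normSq (ξ₀ w)) * (1 + Complex.normSq (ξ₁ w))) * r₀ w : ℝ)) : ℂ)) ν := by
  intro ν hν
  have hUν : U ∈ 𝓝 ν := hU.mem_nhds hν
  have h₀ := hξ₀.differentiableAt hUν
  have h₁ := hξ₁.differentiableAt hUν
  have hr : DifferentiableAt ℝ (fun w => (r₀ w : ℂ)) ν :=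
    Complex.ofRealCLM.differentiableAt.comp ν (hr₀.differentiableAt hUν)
  have hS := one_add_mul_conj_ne_zero (ξ₀ ν)
  have hT := one_add_mul_conj_ne_zero (ξ₁ ν)
  have hST := mul_ne_zero hS hT
  have hD := hden ν hν
  have hDc := reflection_denom_conj_ne_zero hD
  have hξ₂c : (fun w => conj (ξ₂ w)) =ᶠ[𝓝 ν] fun w =>
      (2 * conj (ξ₀ w) * ξ₁ w + 1 - conj (ξ₀ w) * ξ₀ w) /
        ((1 - conj (ξ₀ w) * ξ₀ w) * ξ₁ w - 2 * ξ₀ w) := by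
    filter_upwards [hUν] with w hw using by rw [hξ₂ w hw, conj_reflection]
  simp only [wirtDbar_congr (eventually_of_mem hUν hξ₂), wirtDbar_congr hξ₂c,
    ofReal_reflection_potential]
  simp (disch := first | assumption | fun_prop (disch := assumption)) only
    [wirtDbar_div, wirtDbar_sub, wirtDbar_add, wirtDbar_mul, wirtDbar_const]
  rw [hpot ν hν, hξ₂ ν hν, one_add_reflection_mul_conj hD, hη₂ ν hν, hη₁ ν hν]
  simp only [map_div₀, map_sub, map_add, map_mul, map_one, map_pow, map_ofNat, Complex.conj_conj,
    Complex.conj_ofReal]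
  have hSc : 1 + conj (ξ₀ ν) * ξ₀ ν ≠ 0 := by rw [mul_comm]; exact hS
  -- `field_simp` normalises a compound denominator before trying to show it is nonzero, so
  -- the nonvanishing hypotheses are only found once the denominators are opaque atoms.
  generalize eS : 1 + ξ₀ ν * conj (ξ₀ ν) = S at hS ⊢
  generalize eSc : 1 + conj (ξ₀ ν) * ξ₀ ν = Sc at hSc ⊢
  generalize eT : 1 + ξ₁ ν * conj (ξ₁ ν) = T at hT ⊢
  generalize eD : (1 - ξ₀ ν * conj (ξ₀ ν)) * conj (ξ₁ ν) - 2 * conj (ξ₀ ν) = D at hD ⊢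
  generalize eDc : (1 - conj (ξ₀ ν) * ξ₀ ν) * ξ₁ ν - 2 * ξ₀ ν = Dc at hDc ⊢
  field_simp
  subst eS eSc eT eD eDc
  ring

/-- the fundamental relation between the incident congruence `(ξ₁, η₁)`,
the reflecting surface `(ξ₀, η₀, r₀)` and the reflected congruence `(ξ₂, η₂)`:
`(η₂∂̄ξ̄₂ + η̄₂∂̄ξ₂)/(1+ξ₂ξ̄₂)² = (η₁∂̄ξ̄₁ + η̄₁∂̄ξ₁)/(1+ξ₁ξ̄₁)²
  + ∂̄( ((|ξ₀−ξ₁|² − |1+ξ₀ξ̄₁|²)/((1+ξ₀ξ̄₀)(1+ξ₁ξ̄₁)))·r₀ )`. -/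
theorem reflected_congruence_relation (U : Set ℂ) (hU : IsOpen U)
    (ξ₀ η₀ ξ₁ η₁ ξ₂ η₂ : ℂ → ℂ) (r₀ : ℂ → ℝ)
    (hξ₀ : DifferentiableOn ℝ ξ₀ U) (hη₀ : DifferentiableOn ℝ η₀ U)
    (hξ₁ : DifferentiableOn ℝ ξ₁ U) (hη₁d : DifferentiableOn ℝ η₁ U)
    (hr₀ : DifferentiableOn ℝ r₀ U)
    (hpot : ∀ ν ∈ U,
      wirtDbar (fun w => (r₀ w : ℂ)) ν =
        2 * (η₀ ν * wirtDbar (fun w => conj (ξ₀ w)) ν + conj (η₀ ν) * wirtDbar ξ₀ ν) /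
          (1 + ξ₀ ν * conj (ξ₀ ν)) ^ 2)
    (hden : ∀ ν ∈ U, (1 - ξ₀ ν * conj (ξ₀ ν)) * conj (ξ₁ ν) - 2 * conj (ξ₀ ν) ≠ 0)
    (hξ₂ : ∀ ν ∈ U, ξ₂ ν =
      (2 * ξ₀ ν * conj (ξ₁ ν) + 1 - ξ₀ ν * conj (ξ₀ ν)) /
        ((1 - ξ₀ ν * conj (ξ₀ ν)) * conj (ξ₁ ν) - 2 * conj (ξ₀ ν)))
    (hη₁ : ∀ ν ∈ U, η₁ ν =
      ((1 + conj (ξ₀ ν) * ξ₁ ν) ^ 2 * η₀ ν - (ξ₀ ν - ξ₁ ν) ^ 2 * conj (η₀ ν) +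
          (ξ₀ ν - ξ₁ ν) * (1 + conj (ξ₀ ν) * ξ₁ ν) * (1 + ξ₀ ν * conj (ξ₀ ν)) * (r₀ ν : ℂ)) /
        (1 + ξ₀ ν * conj (ξ₀ ν)) ^ 2)
    (hη₂ : ∀ ν ∈ U, η₂ ν =
      ((conj (ξ₀ ν) - conj (ξ₁ ν)) ^ 2 * η₀ ν - (1 + ξ₀ ν * conj (ξ₁ ν)) ^ 2 * conj (η₀ ν) +
          (conj (ξ₀ ν) - conj (ξ₁ ν)) * (1 + ξ₀ ν * conj (ξ₁ ν)) * (1 + ξ₀ ν * conj (ξ₀ ν)) *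
            (r₀ ν : ℂ)) /
        ((1 - ξ₀ ν * conj (ξ₀ ν)) * conj (ξ₁ ν) - 2 * conj (ξ₀ ν)) ^ 2) :
    ∀ ν ∈ U,
      (η₂ ν * wirtDbar (fun w => conj (ξ₂ w)) ν + conj (η₂ ν) * wirtDbar ξ₂ ν) /
          (1 + ξ₂ ν * conj (ξ₂ ν)) ^ 2 =
        (η₁ ν * wirtDbar (fun w => conj (ξ₁ w)) ν + conj (η₁ ν) * wirtDbar ξ₁ ν) /
            (1 + ξ₁ ν * conj (ξ₁ ν)) ^ 2 +
          wirtDbar (fun w =>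
            ((((Complex.normSq (ξ₀ w - ξ₁ w) - Complex.normSq (1 + ξ₀ w * conj (ξ₁ w))) /
                ((1 + Complex.normSq (ξ₀ w)) * (1 + Complex.normSq (ξ₁ w))) * r₀ w : ℝ)) : ℂ)) ν :=
  reflected_congruence_relation_general U hU ξ₀ η₀ ξ₁ η₁ ξ₂ η₂ r₀ hξ₀ hξ₁ hr₀ hpot hden hξ₂ hη₁ hη₂
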